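/- arXiv:2511.22932 — 6 statements merged into one kernel-verified Lean document; each statement's English description precedes it below -/
import Mathlib

section
/- For every angle α ∈ ℝ, the minimal wave speed c*(α) = inf_{λ>0} g_α(λ)/λ is a well-defined positive real number, i.e., the set {g_α(λ)/λ : λ > 0} is nonempty and bounded below, and its infimum is strictly positive. -/
open Real Set Filter

/-!
Since `cosh t ≥ 1 + t² / 2` and `δ₁² + δ₂² + δ₃² = 3 / 2` for every `α`, we get
`g_α(λ) ≥ a + λ² / 4`, hence `g_α(λ) / λ ≥ a / λ + λ / 4 ≥ √a` by AM–GM.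
-/

noncomputable def delta1 (α : ℝ) : ℝ := Real.cos α
noncomputable def delta2 (α : ℝ) : ℝ := (1/2) * Real.cos α + (Real.sqrt 3 / 2) * Real.sin α
noncomputable def delta3 (α : ℝ) : ℝ := (1/2) * Real.cos α - (Real.sqrt 3 / 2) * Real.sin α

/-- The function g_α(λ) from the minimal wave speed formula, with `a` playing the role of f'(0). -/
noncomputable def gfun (a α l : ℝ) : ℝ :=
  (1/6) * ((Real.exp (l * delta1 α) + Real.exp (-(l * delta1 α)))
    + (Real.exp (l * delta2 α) + Real.exp (-(l * delta2 α)))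
    + (Real.exp (l * delta3 α) + Real.exp (-(l * delta3 α)))) - 1 + a

/-- The minimal wave speed c*(α) = inf_{λ>0} g_α(λ)/λ. -/
noncomputable def cstar (a α : ℝ) : ℝ := sInf {c : ℝ | ∃ l : ℝ, 0 < l ∧ c = gfun a α l / l}

/-!
Since `cosh t ≥ 1 + t² / 2` and `δ₁² + δ₂² + δ₃² = 3 / 2` for every `α`, we get
`g_α(λ) ≥ a + λ² / 4`, hence `g_α(λ) / λ ≥ a / λ + λ / 4 ≥ √a` by AM–GM.
-/

lemma Real.one_add_sq_div_two_le_cosh (x : ℝ) : 1 + x ^ 2 / 2 ≤ cosh x := by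
  have hsinh : (x / 2) ^ 2 ≤ sinh (x / 2) ^ 2 := by
    rw [← sq_abs (sinh _), abs_sinh, ← sq_abs (x / 2)]
    exact pow_le_pow_left₀ (abs_nonneg _) (self_le_sinh_iff.mpr (abs_nonneg _)) 2
  have hcosh : cosh x = 1 + 2 * sinh (x / 2) ^ 2 := by
    have h := cosh_two_mul (x / 2)
    rwa [mul_div_cancel₀ x two_ne_zero, cosh_sq', add_assoc, ← two_mul] at h
  nlinarith

lemma gfun_eq_cosh (a α l : ℝ) :
    gfun a α l = (cosh (l * delta1 α) + cosh (l * delta2 α) + cosh (l * delta3 α)) / 3 - 1 + a := by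
  simp only [gfun, cosh_eq]
  ring

lemma delta1_sq_add_delta2_sq_add_delta3_sq (α : ℝ) :
    delta1 α ^ 2 + delta2 α ^ 2 + delta3 α ^ 2 = 3 / 2 := by
  have hsqrt : √3 ^ 2 = 3 := sq_sqrt (by norm_num)
  simp only [delta1, delta2, delta3]
  linear_combination (3 / 2) * cos_sq_add_sin_sq α + (sin α ^ 2 / 2) * hsqrt

lemma add_sq_div_four_le_gfun (a α l : ℝ) : a + l ^ 2 / 4 ≤ gfun a α l := by
  have h1 := one_add_sq_div_two_le_cosh (l * delta1 α)
  have h2 := one_add_sq_div_two_le_cosh (l * delta2 α)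
  have h3 := one_add_sq_div_two_le_cosh (l * delta3 α)
  have hδ := delta1_sq_add_delta2_sq_add_delta3_sq α
  rw [gfun_eq_cosh]
  linear_combination (h1 + h2 + h3) / 3 - l ^ 2 / 6 * hδ

lemma sqrt_le_gfun_div {a : ℝ} (ha : 0 ≤ a) (α : ℝ) {l : ℝ} (hl : 0 < l) :
    √a ≤ gfun a α l / l := by
  rw [le_div_iff₀ hl]
  have hsq : √a ^ 2 = a := sq_sqrt ha
  calc √a * l ≤ a + l ^ 2 / 4 := by nlinarith [sq_nonneg (l / 2 - √a)]
    _ ≤ gfun a α l := add_sq_div_four_le_gfun a α l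

theorem stmt0 (a : ℝ) (ha : 0 < a) (α : ℝ) :
    ({c : ℝ | ∃ l : ℝ, 0 < l ∧ c = gfun a α l / l}).Nonempty ∧
    BddBelow {c : ℝ | ∃ l : ℝ, 0 < l ∧ c = gfun a α l / l} ∧
    0 < cstar a α := by
  have hne : ({c : ℝ | ∃ l : ℝ, 0 < l ∧ c = gfun a α l / l}).Nonempty := ⟨_, 1, one_pos, rfl⟩
  have hlb : √a ∈ lowerBounds {c : ℝ | ∃ l : ℝ, 0 < l ∧ c = gfun a α l / l} := by
    rintro _ ⟨l, hl, rfl⟩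
    exact sqrt_le_gfun_div ha.le α hl
  exact ⟨hne, ⟨√a, hlb⟩, (sqrt_pos.mpr ha).trans_le (le_csInf hne hlb)⟩
end

section
/- Assume c > c*(α) and let λ₁ be the smallest positive root of c·λ = g(λ). Then the function Ū(ξ) := min{1, exp(λ₁·ξ)} is nondecreasing, takes values in [0,1], and satisfies the upper-solution differential inequality c·Ū′(ξ) ≥ (1/6)·𝒟_h[Ū](ξ) + f(Ū(ξ)) for every ξ ∈ ℝ with ξ ≠ 0. -/
open Real Set Filter

/-- The discrete diffusion operator on the hexagonal lattice, in direction α. -/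
noncomputable def Dh (α : ℝ) (U : ℝ → ℝ) (ξ : ℝ) : ℝ :=
  (U (ξ + delta1 α) + U (ξ - delta1 α)) + (U (ξ + delta2 α) + U (ξ - delta2 α))
    + (U (ξ + delta3 α) + U (ξ - delta3 α)) - 6 * U ξ

/-- Fisher-KPP conditions: f is C¹ on [0,1] with derivative f', f(0)=f(1)=0, f'(0)>0,
and 0 < f(s) ≤ f'(0)·s on (0,1). -/
def FisherKPP (f f' : ℝ → ℝ) : Prop :=
  (∀ s ∈ Set.Icc (0:ℝ) 1, HasDerivAt f (f' s) s) ∧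
  ContinuousOn f' (Set.Icc (0:ℝ) 1) ∧
  f 0 = 0 ∧ f 1 = 0 ∧ 0 < f' 0 ∧
  (∀ s ∈ Set.Ioo (0:ℝ) 1, 0 < f s ∧ f s ≤ f' 0 * s)

/-- A traveling wave with speed c: a C¹ function U : ℝ → [0,1] solving
c·U′ = (1/6)·𝒟_h[U] + f(U) with limits 0 at −∞ and 1 at +∞. -/
def IsTravelingWave (α : ℝ) (f : ℝ → ℝ) (c : ℝ) (U : ℝ → ℝ) : Prop :=
  ContDiff ℝ 1 U ∧ (∀ ξ, U ξ ∈ Set.Icc (0:ℝ) 1) ∧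
  (∀ ξ, c * deriv U ξ = (1/6) * Dh α U ξ + f (U ξ)) ∧
  Filter.Tendsto U Filter.atBot (nhds 0) ∧ Filter.Tendsto U Filter.atTop (nhds 1)

/-!
On `ξ < 0` the barrier `min 1 (exp (λ₁ ξ))` coincides with the exponential, which lies above it
everywhere; since `𝒟_h` is monotone in the values off the centre, `𝒟_h` of the barrier is at most
`𝒟_h` of the exponential, and the characteristic equation `c λ₁ = g(λ₁)` together with
`f(s) ≤ f'(0) s` closes the inequality. On `ξ > 0` the barrier is locally `1`, lies below `1`
everywhere, and `f(1) = 0`.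
-/

open Topology

section Dh

variable (α : ℝ)

theorem Dh_le_Dh_of_le_of_eq {U V : ℝ → ℝ} {ξ : ℝ} (hUV : U ≤ V) (hξ : U ξ = V ξ) :
    Dh α U ξ ≤ Dh α V ξ := by
  unfold Dh
  rw [hξ]
  gcongr <;> apply hUV

theorem Dh_const (k ξ : ℝ) : Dh α (fun _ => k) ξ = 0 := by
  unfold Dh
  ring

theorem Dh_exp_add_mul_eq_gfun_mul (a l ξ : ℝ) :
    (1/6) * Dh α (fun ζ => exp (l * ζ)) ξ + a * exp (l * ξ) = gfun a α l * exp (l * ξ) := by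
  have shift : ∀ d : ℝ, exp (l * (ξ + d)) + exp (l * (ξ - d)) =
      exp (l * ξ) * (exp (l * d) + exp (-(l * d))) := fun d => by
    rw [mul_add, mul_sub, sub_eq_add_neg, exp_add, exp_add]
    ring
  unfold Dh gfun
  rw [shift, shift, shift]
  ring

end Dh

section Barrier

variable {l : ℝ}

theorem min_one_exp_eventuallyEq_exp (hl : 0 ≤ l) {ξ : ℝ} (hξ : ξ < 0) :
    (fun ζ => min 1 (exp (l * ζ))) =ᶠ[𝓝 ξ] fun ζ => exp (l * ζ) := by
  filter_upwards [Iio_mem_nhds hξ] with ζ hζ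
  exact min_eq_right (exp_le_one_iff.2 (mul_nonpos_of_nonneg_of_nonpos hl (le_of_lt hζ)))

theorem min_one_exp_eventuallyEq_one (hl : 0 ≤ l) {ξ : ℝ} (hξ : 0 < ξ) :
    (fun ζ => min 1 (exp (l * ζ))) =ᶠ[𝓝 ξ] fun _ => 1 := by
  filter_upwards [Ioi_mem_nhds hξ] with ζ hζ
  exact min_eq_left (one_le_exp (mul_nonneg hl (le_of_lt hζ)))

variable {α c a : ℝ} {f : ℝ → ℝ}

theorem Dh_min_one_exp_add_le_of_neg (hl : 0 < l) (hroot : c * l = gfun a α l)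
    (hf : ∀ s ∈ Ioo (0:ℝ) 1, f s ≤ a * s) {ξ : ℝ} (hξ : ξ < 0) :
    (1/6) * Dh α (fun ζ => min 1 (exp (l * ζ))) ξ + f (min 1 (exp (l * ξ)))
      ≤ c * deriv (fun ζ => min 1 (exp (l * ζ))) ξ := by
  have hU : min 1 (exp (l * ξ)) = exp (l * ξ) :=
    (min_one_exp_eventuallyEq_exp hl.le hξ).eq_of_nhds
  have hderiv : deriv (fun ζ => min 1 (exp (l * ζ))) ξ = l * exp (l * ξ) := by
    rw [(min_one_exp_eventuallyEq_exp hl.le hξ).deriv_eq]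
    simpa [mul_comm] using ((hasDerivAt_id ξ).const_mul l).exp.deriv
  have hDh : Dh α (fun ζ => min 1 (exp (l * ζ))) ξ ≤ Dh α (fun ζ => exp (l * ζ)) ξ :=
    Dh_le_Dh_of_le_of_eq α (fun ζ => min_le_right _ _) hU
  have hf_exp : f (exp (l * ξ)) ≤ a * exp (l * ξ) :=
    hf _ ⟨exp_pos _, exp_lt_one_iff.2 (mul_neg_of_pos_of_neg hl hξ)⟩
  calc (1/6) * Dh α (fun ζ => min 1 (exp (l * ζ))) ξ + f (min 1 (exp (l * ξ)))
      ≤ (1/6) * Dh α (fun ζ => exp (l * ζ)) ξ + a * exp (l * ξ) := by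
        rw [hU]; linarith
    _ = c * deriv (fun ζ => min 1 (exp (l * ζ))) ξ := by
        rw [Dh_exp_add_mul_eq_gfun_mul, ← hroot, hderiv, mul_assoc]

theorem Dh_min_one_exp_add_le_of_pos (hl : 0 ≤ l) (hf : f 1 = 0) {ξ : ℝ} (hξ : 0 < ξ) :
    (1/6) * Dh α (fun ζ => min 1 (exp (l * ζ))) ξ + f (min 1 (exp (l * ξ)))
      ≤ c * deriv (fun ζ => min 1 (exp (l * ζ))) ξ := by
  have hU : min 1 (exp (l * ξ)) = 1 := (min_one_exp_eventuallyEq_one hl hξ).eq_of_nhds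
  have hDh : Dh α (fun ζ => min 1 (exp (l * ζ))) ξ ≤ Dh α (fun _ => 1) ξ :=
    Dh_le_Dh_of_le_of_eq α (fun ζ => min_le_left _ _) hU
  calc (1/6) * Dh α (fun ζ => min 1 (exp (l * ζ))) ξ + f (min 1 (exp (l * ξ)))
      ≤ (1/6) * Dh α (fun _ => 1) ξ + f 1 := by
        rw [hU]; linarith
    _ = c * deriv (fun ζ => min 1 (exp (l * ζ))) ξ := by
        rw [Dh_const, hf, (min_one_exp_eventuallyEq_one hl hξ).deriv_eq, deriv_const]
        ring

end Barrier

theorem stmt2_general (α : ℝ) (f f' : ℝ → ℝ) (hf : FisherKPP f f')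
    (c l1 : ℝ)
    (hl1pos : 0 < l1) (hroot : c * l1 = gfun (f' 0) α l1) :
    Monotone (fun ξ : ℝ => min 1 (Real.exp (l1 * ξ))) ∧
    (∀ ξ : ℝ, min 1 (Real.exp (l1 * ξ)) ∈ Set.Icc (0:ℝ) 1) ∧
    (∀ ξ : ℝ, ξ ≠ 0 →
      (1/6) * Dh α (fun ζ : ℝ => min 1 (Real.exp (l1 * ζ))) ξ + f (min 1 (Real.exp (l1 * ξ)))
        ≤ c * deriv (fun ζ : ℝ => min 1 (Real.exp (l1 * ζ))) ξ) := by
  obtain ⟨-, -, -, hf1, -, hkpp⟩ := hf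
  refine ⟨monotone_const.min (exp_monotone.comp (monotone_mul_left_of_nonneg hl1pos.le)),
    fun ξ => ⟨le_min zero_le_one (exp_pos _).le, min_le_left _ _⟩, fun ξ hξ => ?_⟩
  rcases hξ.lt_or_gt with hneg | hpos
  · exact Dh_min_one_exp_add_le_of_neg hl1pos hroot (fun s hs => (hkpp s hs).2) hneg
  · exact Dh_min_one_exp_add_le_of_pos hl1pos.le hf1 hpos

theorem stmt2 (α : ℝ) (f f' : ℝ → ℝ) (hf : FisherKPP f f')
    (c l1 : ℝ) (hc : cstar (f' 0) α < c)
    (hl1pos : 0 < l1) (hroot : c * l1 = gfun (f' 0) α l1)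
    (hmin : ∀ l : ℝ, 0 < l → c * l = gfun (f' 0) α l → l1 ≤ l) :
    Monotone (fun ξ : ℝ => min 1 (Real.exp (l1 * ξ))) ∧
    (∀ ξ : ℝ, min 1 (Real.exp (l1 * ξ)) ∈ Set.Icc (0:ℝ) 1) ∧
    (∀ ξ : ℝ, ξ ≠ 0 →
      (1/6) * Dh α (fun ζ : ℝ => min 1 (Real.exp (l1 * ζ))) ξ + f (min 1 (Real.exp (l1 * ξ)))
        ≤ c * deriv (fun ζ : ℝ => min 1 (Real.exp (l1 * ζ))) ξ) :=
  stmt2_general α f f' hf c l1 hl1pos hroot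
end

section
/- (Nonexistence below the minimal speed, necessity.) Assume the Fisher-KPP conditions. If there exists a traveling wave U with speed c — i.e., a continuously differentiable U : ℝ → [0,1] with c·U′(ξ) = (1/6)·𝒟_h[U](ξ) + f(U(ξ)) for all ξ, lim_{ξ→−∞} U(ξ) = 0 and lim_{ξ→+∞} U(ξ) = 1 — then c ≥ c*(α). -/
open Real Set Filter

/-!
Suppose `c < c*(α)`, i.e. `c λ < g(λ)` for every `λ > 0`. As `g` is superlinear, some real `μ`
has `g'(μ) > c` and `μ g'(μ) < g(μ)`; moving `μ` slightly into the complex plane gives a root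
`Λ = μ + iν`, `ν > 0` small, of `g(Λ) - κ = c' Λ` with real `c' > c` and `κ > 0`. Then
`W(x) = Im e^{Λx} = e^{μx} sin(νx)` solves the equation linearised at `0` with speed `c'` and
growth rate `f'(0) - κ`, and is positive exactly on the hump `(0, π/ν)`.

The wave is positive (a zero of `U` would propagate along the lattice and contradict `U → 1`),
so a small multiple `εW` lies below `U` on the hump. Translating `U` to the left, where it
tends to `0`, it first touches `εW` at an interior point of the hump. There the derivatives
agree and are `≥ 0`, the lattice neighbours satisfy `U ≥ εW`, and `f(s) > (f'(0) - κ) s` for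
small `s`, so comparing the two equations gives `c > c'`, a contradiction.
-/

open Topology
open scoped Complex

lemma HasDerivAt.nonneg_of_forall_le_of_lt {f : ℝ → ℝ} {f' x b : ℝ} (hf : HasDerivAt f f' x)
    (hxb : x < b) (hle : ∀ y ∈ Ioo x b, f x ≤ f y) : 0 ≤ f' := by
  refine ge_of_tendsto ((hasDerivAt_iff_tendsto_slope.1 hf).mono_left
    (nhdsWithin_mono x (show Ioi x ⊆ {x}ᶜ from fun y hy => ne_of_gt hy))) ?_
  filter_upwards [Ioo_mem_nhdsGT hxb] with y hy
  rw [slope_def_field]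
  exact div_nonneg (sub_nonneg.2 (hle y hy)) (sub_nonneg.2 hy.1.le)

lemma deriv_eq_of_le_of_eq {U V : ℝ → ℝ} {V' s x₀ : ℝ} {K : Set ℝ} (hK : K ∈ 𝓝 x₀)
    (hU : DifferentiableAt ℝ U (s + x₀)) (hV : HasDerivAt V V' x₀)
    (hle : ∀ x ∈ K, V x ≤ U (s + x)) (heq : U (s + x₀) = V x₀) : deriv U (s + x₀) = V' := by
  have hmin : IsLocalMin (fun x => U (s + x) - V x) x₀ := by
    filter_upwards [hK] with x hx
    linarith [hle x hx]
  have := hmin.hasDerivAt_eq_zero ((hU.hasDerivAt.comp_const_add s x₀).sub hV)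
  linarith

lemma exists_mul_lt_of_hasDerivAt {f : ℝ → ℝ} {a b : ℝ} (hf : HasDerivAt f a 0) (hf0 : f 0 = 0)
    (hb : b < a) : ∃ θ > 0, ∀ s ∈ Ioc 0 θ, b * s < f s := by
  have hslope := (hasDerivAt_iff_tendsto_slope.1 hf).mono_left
    (nhdsWithin_mono _ fun y (hy : 0 < y) => hy.ne')
  obtain ⟨θ, hθ, hsub⟩ := mem_nhdsGT_iff_exists_Ioc_subset.1 (hslope.eventually (lt_mem_nhds hb))
  refine ⟨θ, hθ, fun s hs => ?_⟩
  have h : b < slope f 0 s := hsub hs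
  rwa [slope_def_field, hf0, sub_zero, sub_zero, lt_div_iff₀ hs.1] at h

lemma exists_slope_gt_and_intercept_pos {G G' : ℝ → ℝ} (hG : Continuous G)
    (hG' : Continuous G') {c μ₁ : ℝ} (hG0 : 0 < G 0) (hcG : ∀ l, 0 < l → c * l < G l)
    (hμ₁ : 0 ≤ μ₁) (hc₁ : c < G' μ₁) : ∃ μ, c < G' μ ∧ μ * G' μ < G μ := by
  set Z := Icc 0 μ₁ ∩ {μ | G μ ≤ μ * G' μ}
  rcases Z.eq_empty_or_nonempty with hZ | hZ
  · exact ⟨μ₁, hc₁, lt_of_not_ge fun h => hZ.subset ⟨⟨hμ₁, le_rfl⟩, h⟩⟩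
  have hZc : IsCompact Z := isCompact_Icc.inter_right (isClosed_le hG (by fun_prop))
  obtain ⟨μh, ⟨hμhI, hμhZ : G μh ≤ μh * G' μh⟩, hleast⟩ := hZc.exists_isLeast hZ
  have hpos : 0 < μh := lt_of_le_of_ne hμhI.1 fun h => by subst h; linarith
  have hcμh : c < G' μh := lt_of_mul_lt_mul_left
    (by linarith [hcG μh hpos, mul_comm c μh] : μh * c < μh * G' μh) hpos.le
  obtain ⟨μ, hc, hμ⟩ := ((((hG'.tendsto μh).eventually (lt_mem_nhds hcμh)).filter_mono
    nhdsWithin_le_nhds).and (Ioo_mem_nhdsLT hpos)).exists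
  exact ⟨μ, hc, lt_of_not_ge fun h =>
    (hleast ⟨⟨hμ.1.le, hμ.2.le.trans hμhI.2⟩, h⟩).not_gt hμ.2⟩

lemma exists_pos_mul_lt_of_isCompact {K : Set ℝ} (hK : IsCompact K) {U W : ℝ → ℝ}
    (hU : ContinuousOn U K) (hUpos : ∀ x ∈ K, 0 < U x) (hW : ContinuousOn W K) :
    ∃ ε > 0, ∀ x ∈ K, ε * W x < U x := by
  obtain ⟨m, hm, hmU⟩ := hK.exists_forall_le' hU hUpos
  obtain ⟨C, hC⟩ := hK.exists_bound_of_continuousOn hW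
  refine ⟨m / (|C| + 1), by positivity, fun x hx => ?_⟩
  have hWx : W x < |C| + 1 := by
    linarith [le_abs_self (W x), (Real.norm_eq_abs (W x)) ▸ hC x hx, le_abs_self C]
  calc m / (|C| + 1) * W x < m / (|C| + 1) * (|C| + 1) := by gcongr
    _ = m := div_mul_cancel₀ m (by positivity)
    _ ≤ U x := hmU x hx

lemma exists_first_contact {K : Set ℝ} (hK : IsCompact K) {U V : ℝ → ℝ} (hU : Continuous U)
    (hV : Continuous V) (hbot : Tendsto U atBot (𝓝 0)) (hVU : ∀ x ∈ K, V x < U x) {x₁ : ℝ}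
    (hx₁ : x₁ ∈ K) (hV₁ : 0 < V x₁) :
    ∃ s₀ < 0, ∃ x₀ ∈ K, U (s₀ + x₀) = V x₀ ∧ (∀ x ∈ K, V x ≤ U (s₀ + x)) ∧
      ∀ s ∈ Ioc s₀ 0, ∀ x ∈ K, V x < U (s + x) := by
  obtain ⟨s₁, hs₁, hs₁0⟩ := (((hbot.comp (tendsto_atBot_add_const_right _ x₁ tendsto_id)).eventually
    (gt_mem_nhds hV₁)).and (eventually_le_atBot 0)).exists
  set C := (Icc s₁ 0 ×ˢ K) ∩ {p : ℝ × ℝ | U (p.1 + p.2) ≤ V p.2}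
  have hC : IsCompact C :=
    (isCompact_Icc.prod hK).inter_right (isClosed_le (by fun_prop) (by fun_prop))
  obtain ⟨⟨s₀, x₀⟩, ⟨⟨hs₀, hx₀⟩, hle : U (s₀ + x₀) ≤ V x₀⟩, hmax⟩ :=
    hC.exists_isMaxOn ⟨(s₁, x₁), ⟨⟨le_rfl, hs₁0⟩, hx₁⟩, hs₁.le⟩ continuous_fst.continuousOn
  have hlater : ∀ s ∈ Ioc s₀ 0, ∀ x ∈ K, V x < U (s + x) := fun s hs x hx =>
    lt_of_not_ge fun h =>
      (isMaxOn_iff.1 hmax (s, x) ⟨⟨⟨hs₀.1.trans hs.1.le, hs.2⟩, hx⟩, h⟩).not_gt hs.1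
  have hs₀neg : s₀ < 0 := lt_of_le_of_ne hs₀.2 fun h => by
    rw [h, zero_add] at hle
    exact (hVU x₀ hx₀).not_ge hle
  have hcontact : ∀ x ∈ K, V x ≤ U (s₀ + x) := fun x hx =>
    ge_of_tendsto (((hU.comp (continuous_add_const x)).tendsto s₀).mono_left nhdsWithin_le_nhds)
      (by filter_upwards [Ioo_mem_nhdsGT hs₀neg] with s hs using (hlater s ⟨hs.1, hs.2.le⟩ x hx).le)
  exact ⟨s₀, hs₀neg, x₀, hx₀, le_antisymm hle (hcontact x₀ hx₀), hcontact, hlater⟩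

lemma sin_nonpos_of_notMem_Ioo {t : ℝ} (h₁ : -π ≤ t) (h₂ : t ≤ 2 * π) (h : t ∉ Ioo 0 π) :
    Real.sin t ≤ 0 := by
  rcases le_or_gt t 0 with ht | ht
  · exact sin_nonpos_of_nonpos_of_neg_pi_le ht h₁
  · have hπt : π ≤ t := le_of_not_gt fun h' => h ⟨ht, h'⟩
    have := sin_nonneg_of_nonneg_of_le_pi (sub_nonneg.2 hπt) (by linarith : t - π ≤ π)
    rw [sin_sub_pi] at this
    linarith

lemma im_cexp_mul_ofReal (Λ : ℂ) (y : ℝ) :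
    (cexp (Λ * y)).im = rexp (Λ.re * y) * Real.sin (Λ.im * y) := by
  simp [Complex.exp_im]

lemma hasDerivAt_im_cexp_mul_ofReal (Λ : ℂ) (x : ℝ) :
    HasDerivAt (fun y : ℝ => (cexp (Λ * y)).im) (cexp (Λ * x) * Λ).im x := by
  have h : HasDerivAt (fun y : ℝ => cexp (Λ * y)) (cexp (Λ * x) * Λ) x := by
    simpa using ((hasDerivAt_id (x : ℂ)).const_mul Λ).cexp.comp_ofReal
  exact Complex.imCLM.hasFDerivAt.comp_hasDerivAt x h

lemma im_cexp_mul_ofReal_add_nonpos {Λ : ℂ} (hν : 0 < Λ.im) {x δ : ℝ}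
    (hx : x ∈ Icc 0 (π / Λ.im)) (hδ : Λ.im * |δ| ≤ π) (hxδ : x + δ ∉ Icc 0 (π / Λ.im)) :
    (cexp (Λ * ↑(x + δ))).im ≤ 0 := by
  obtain ⟨hx₁, hx₂⟩ : 0 ≤ x ∧ Λ.im * x ≤ π := by rwa [mem_Icc, le_div_iff₀' hν] at hx
  obtain ⟨hδ₁, hδ₂⟩ := abs_le.1 (show |Λ.im * δ| ≤ π by rwa [abs_mul, abs_of_pos hν])
  rw [im_cexp_mul_ofReal]
  refine mul_nonpos_of_nonneg_of_nonpos (exp_pos _).le (sin_nonpos_of_notMem_Ioo ?_ ?_ ?_)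
  · rw [mul_add]; linarith [mul_nonneg hν.le hx₁]
  · rw [mul_add]; linarith
  · rintro ⟨h₁, h₂⟩
    exact hxδ ⟨(pos_of_mul_pos_right h₁ hν.le).le, by rw [le_div_iff₀' hν]; exact h₂.le⟩

noncomputable section LatticeDiffusion

variable {ι : Type*} [Fintype ι] (w d : ι → ℝ)

def latticeDiffusion (U : ℝ → ℝ) (ξ : ℝ) : ℝ :=
  ∑ i, w i * (U (ξ + d i) + U (ξ - d i) - 2 * U ξ)

def diffusionSymbol (Λ : ℂ) : ℂ :=
  ∑ i, (w i : ℂ) * (cexp (Λ * d i) + cexp (-(Λ * d i)) - 2)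

/-- The derivative of `l ↦ (diffusionSymbol w d l).re`. -/
def symbolSlope (μ : ℝ) : ℝ :=
  ∑ i, w i * d i * (rexp (μ * d i) - rexp (-(μ * d i)))

variable {w d}

lemma latticeDiffusion_const_mul (ε : ℝ) (U : ℝ → ℝ) (ξ : ℝ) :
    latticeDiffusion w d (fun y => ε * U y) ξ = ε * latticeDiffusion w d U ξ := by
  simp only [latticeDiffusion, Finset.mul_sum]
  exact Finset.sum_congr rfl fun i _ => by ring

lemma latticeDiffusion_le_of_touch (hw : ∀ i, 0 ≤ w i) {U V : ℝ → ℝ} {ξ x : ℝ}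
    (htouch : U ξ = V x)
    (hshift : ∀ i, V (x + d i) ≤ U (ξ + d i) ∧ V (x - d i) ≤ U (ξ - d i)) :
    latticeDiffusion w d V x ≤ latticeDiffusion w d U ξ := by
  refine Finset.sum_le_sum fun i _ => mul_le_mul_of_nonneg_left ?_ (hw i)
  linarith [hshift i]

lemma latticeDiffusion_im_cexp (Λ : ℂ) (x : ℝ) :
    latticeDiffusion w d (fun y => (cexp (Λ * y)).im) x
      = (cexp (Λ * x) * diffusionSymbol w d Λ).im := by
  simp only [latticeDiffusion, diffusionSymbol, Finset.mul_sum, Complex.im_sum]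
  refine Finset.sum_congr rfl fun i _ => ?_
  have hadd : cexp (Λ * ↑(x + d i)) = cexp (Λ * x) * cexp (Λ * d i) := by
    rw [← Complex.exp_add]; push_cast; ring_nf
  have hsub : cexp (Λ * ↑(x - d i)) = cexp (Λ * x) * cexp (-(Λ * d i)) := by
    rw [← Complex.exp_add]; push_cast; ring_nf
  rw [hadd, hsub, show cexp (Λ * x) * (w i * (cexp (Λ * d i) + cexp (-(Λ * d i)) - 2))
    = (w i : ℂ) * (cexp (Λ * x) * cexp (Λ * d i) + cexp (Λ * x) * cexp (-(Λ * d i))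
      - 2 * cexp (Λ * x)) by ring, Complex.im_ofReal_mul]
  simp

lemma latticeDiffusion_im_cexp_add_mul {Λ : ℂ} {b cp : ℝ}
    (hΛ : diffusionSymbol w d Λ + b = cp * Λ) (x : ℝ) :
    latticeDiffusion w d (fun y => (cexp (Λ * y)).im) x + b * (cexp (Λ * x)).im
      = cp * (cexp (Λ * x) * Λ).im := by
  have h := congrArg (fun z => (cexp (Λ * x) * z).im) hΛ
  rw [latticeDiffusion_im_cexp]
  simp only [mul_add, Complex.add_im, Complex.mul_im, Complex.mul_re, Complex.ofReal_re,
    Complex.ofReal_im] at h ⊢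
  linear_combination h

lemma diffusionSymbol_ofReal_re (l : ℝ) :
    (diffusionSymbol w d l).re = ∑ i, w i * (rexp (l * d i) + rexp (-(l * d i)) - 2) := by
  simp only [diffusionSymbol, Complex.re_sum, Complex.re_ofReal_mul]
  refine Finset.sum_congr rfl fun i _ => ?_
  rw [← Complex.ofReal_mul, ← Complex.ofReal_neg, ← Complex.ofReal_exp, ← Complex.ofReal_exp]
  simp only [Complex.add_re, Complex.sub_re, Complex.ofReal_re, Complex.re_ofNat]

lemma diffusionSymbol_ofReal_re_nonneg (hw : ∀ i, 0 ≤ w i) (l : ℝ) :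
    0 ≤ (diffusionSymbol w d l).re := by
  rw [diffusionSymbol_ofReal_re]
  refine Finset.sum_nonneg fun i _ => mul_nonneg (hw i) ?_
  linarith [Real.one_le_cosh (l * d i), Real.cosh_eq (l * d i)]

lemma diffusionSymbol_zero : diffusionSymbol w d 0 = 0 := by
  simp only [diffusionSymbol, zero_mul, Complex.exp_zero, neg_zero]
  norm_num

lemma diffusionSymbol_im (μ ν : ℝ) :
    (diffusionSymbol w d ⟨μ, ν⟩).im
      = ∑ i, w i * (rexp (μ * d i) - rexp (-(μ * d i))) * Real.sin (ν * d i) := by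
  simp only [diffusionSymbol, Complex.im_sum, Complex.im_ofReal_mul]
  refine Finset.sum_congr rfl fun i _ => ?_
  simp only [Complex.sub_im, Complex.add_im, Complex.exp_im, Complex.mul_re, Complex.ofReal_re,
    Complex.ofReal_im, mul_zero, sub_zero, Complex.mul_im, zero_add, Complex.neg_re,
    Complex.neg_im, sin_neg, Complex.im_ofNat]
  ring

lemma diffusionSymbol_im_eq_mul_sinc (μ ν : ℝ) :
    (diffusionSymbol w d ⟨μ, ν⟩).im
      = ν * ∑ i, w i * d i * (rexp (μ * d i) - rexp (-(μ * d i))) * sinc (ν * d i) := by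
  rw [diffusionSymbol_im, Finset.mul_sum]
  refine Finset.sum_congr rfl fun i _ => ?_
  rcases eq_or_ne (ν * d i) 0 with h | h
  · rw [h, Real.sin_zero]
    rcases mul_eq_zero.1 h with h | h <;> simp [h]
  · obtain ⟨hν, hd⟩ := mul_ne_zero_iff.1 h
    rw [sinc_of_ne_zero h]
    field_simp

lemma continuous_diffusionSymbol : Continuous (diffusionSymbol w d) := by
  unfold diffusionSymbol; fun_prop

lemma continuous_symbolSlope : Continuous (symbolSlope w d) := by
  unfold symbolSlope; fun_prop

lemma mul_sum_sq_le_symbolSlope (hw : ∀ i, 0 ≤ w i) {μ : ℝ} (hμ : 0 ≤ μ) :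
    2 * μ * ∑ i, w i * d i ^ 2 ≤ symbolSlope w d μ := by
  rw [symbolSlope, Finset.mul_sum]
  refine Finset.sum_le_sum fun i _ => ?_
  have hsinh : d i * (μ * d i) ≤ d i * Real.sinh (μ * d i) := by
    rcases le_total 0 (d i) with h | h
    · exact mul_le_mul_of_nonneg_left (Real.self_le_sinh_iff.2 (mul_nonneg hμ h)) h
    · exact mul_le_mul_of_nonpos_left
        (Real.sinh_le_self_iff.2 (mul_nonpos_of_nonneg_of_nonpos hμ h)) h
  rw [Real.sinh_eq] at hsinh
  nlinarith [mul_le_mul_of_nonneg_left hsinh (hw i)]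

lemma exists_diffusionSymbol_eq_mul {a c μ : ℝ} (hc : c < symbolSlope w d μ)
    (hint : μ * symbolSlope w d μ < (diffusionSymbol w d μ).re + a) :
    ∃ Λ : ℂ, ∃ cp κ : ℝ, 0 < Λ.im ∧ (∀ i, Λ.im * |d i| ≤ π) ∧ c < cp ∧ 0 < κ ∧
      diffusionSymbol w d Λ + (a - κ : ℝ) = cp * Λ := by
  -- `g ν = Im S(μ + iν) / ν`; with `cp = g ν` and `κ = Re S(μ + iν) + a - cp μ`, `μ + iν` is a
  -- root, and as `ν → 0⁺` these tend to `symbolSlope μ` and the intercept in `hint`.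
  set g : ℝ → ℝ := fun ν => ∑ i, w i * d i * (rexp (μ * d i) - rexp (-(μ * d i))) * sinc (ν * d i)
  have hg : Tendsto g (𝓝[>] 0) (𝓝 (symbolSlope w d μ)) := by
    have : Continuous g := by fun_prop
    simpa [g, symbolSlope, mul_right_comm _ (d _)] using
      (this.tendsto 0).mono_left nhdsWithin_le_nhds
  have hre : Tendsto (fun ν : ℝ => (diffusionSymbol w d ⟨μ, ν⟩).re) (𝓝[>] 0)
      (𝓝 (diffusionSymbol w d μ).re) := by
    have : Continuous fun ν : ℝ => (diffusionSymbol w d ⟨μ, ν⟩).re := by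
      simp only [Complex.mk_eq_add_mul_I]
      exact Complex.continuous_re.comp (continuous_diffusionSymbol.comp (by fun_prop))
    exact (this.tendsto 0).mono_left nhdsWithin_le_nhds
  have hκ := (hre.add_const a).sub (hg.mul_const μ)
  have hsmall : ∀ i, ∀ᶠ ν in 𝓝[>] (0 : ℝ), ν * |d i| ≤ π := fun i =>
    (((continuous_mul_const |d i|).tendsto' 0 0 (zero_mul _)).eventually
      (ge_mem_nhds pi_pos)).filter_mono nhdsWithin_le_nhds
  obtain ⟨ν, hν, hνd, hcg, hκpos⟩ := (eventually_mem_nhdsWithin.and ((eventually_all.2 hsmall).and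
    ((hg.eventually (lt_mem_nhds hc)).and
      (hκ.eventually (lt_mem_nhds (a := 0) (by linarith)))))).exists
  refine ⟨⟨μ, ν⟩, g ν, (diffusionSymbol w d ⟨μ, ν⟩).re + a - g ν * μ, hν, hνd, hcg,
    hκpos, Complex.ext ?_ ?_⟩
  · simp only [Complex.add_re, Complex.ofReal_re, Complex.mul_re, Complex.ofReal_im, zero_mul,
      sub_zero]
    ring
  · simp only [Complex.add_im, Complex.ofReal_im, add_zero, Complex.mul_im, Complex.ofReal_re,
      zero_mul, diffusionSymbol_im_eq_mul_sinc]
    exact mul_comm _ _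

end LatticeDiffusion

section Wave

variable {ι : Type*} [Fintype ι] {w d : ι → ℝ}

lemma lt_speed_of_contact (hw : ∀ i, 0 ≤ w i) {U V f : ℝ → ℝ} {b c cp ξ₀ x₀ V' : ℝ}
    (heq : c * deriv U ξ₀ = latticeDiffusion w d U ξ₀ + f (U ξ₀))
    (hV : latticeDiffusion w d V x₀ + b * V x₀ = cp * V') (htouch : U ξ₀ = V x₀)
    (hshift : ∀ i, V (x₀ + d i) ≤ U (ξ₀ + d i) ∧ V (x₀ - d i) ≤ U (ξ₀ - d i))
    (hderiv : deriv U ξ₀ = V') (hV' : 0 ≤ V') (hf : b * V x₀ < f (V x₀)) : cp < c := by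
  have hL := latticeDiffusion_le_of_touch hw htouch hshift
  rw [hderiv, htouch] at heq
  by_contra! h
  nlinarith [mul_le_mul_of_nonneg_right h hV']

lemma pos_of_travelingWave (hw : ∀ i, 0 ≤ w i) (hwd : 0 < ∑ i, w i * d i ^ 2) {f : ℝ → ℝ}
    (hf0 : f 0 = 0) {c : ℝ} {U : ℝ → ℝ} (hU0 : ∀ ξ, 0 ≤ U ξ)
    (heq : ∀ ξ, c * deriv U ξ = latticeDiffusion w d U ξ + f (U ξ))
    (htop : Tendsto U atTop (𝓝 1)) (ξ : ℝ) : 0 < U ξ := by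
  obtain ⟨j, -, hj⟩ := Finset.exists_lt_of_sum_lt (by simpa using hwd : ∑ _i : ι, (0 : ℝ) < _)
  have hwj : 0 < w j := (hw j).lt_of_ne fun h => by simp [← h] at hj
  have hdj : 0 < |d j| := abs_pos.2 fun h => by simp [h] at hj
  have hstep : ∀ ξ, U ξ = 0 → U (ξ + |d j|) = 0 := by
    intro ξ hξ
    have h := heq ξ
    rw [(show IsLocalMin U ξ from .of_forall fun y => hξ ▸ hU0 y).deriv_eq_zero, hξ, hf0,
      mul_zero, add_zero, latticeDiffusion] at h
    have hterm := (Finset.sum_eq_zero_iff_of_nonneg fun i _ => mul_nonneg (hw i)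
      (by linarith [hU0 (ξ + d i), hU0 (ξ - d i)])).1 h.symm j (Finset.mem_univ j)
    rw [hξ, mul_eq_zero, or_iff_right hwj.ne'] at hterm
    rcases abs_cases (d j) with ⟨h, -⟩ | ⟨h, -⟩ <;> simp only [h, ← sub_eq_add_neg] <;>
      linarith [hU0 (ξ + d j), hU0 (ξ - d j)]
  refine (hU0 ξ).lt_of_ne fun h0 => ?_
  have hn : ∀ n : ℕ, U (ξ + n * |d j|) = 0 := by
    intro n
    induction n with
    | zero => simpa using h0.symm
    | succ n ih => simpa [add_mul, add_assoc] using hstep _ ih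
  have hlim := htop.comp (tendsto_atTop_add_const_left _ ξ
    (tendsto_natCast_atTop_atTop.atTop_mul_const hdj))
  simp only [Function.comp_def, hn] at hlim
  exact zero_ne_one (tendsto_nhds_unique tendsto_const_nhds hlim)

lemma lt_speed_of_diffusionSymbol_eq_mul (hw : ∀ i, 0 ≤ w i) {f : ℝ → ℝ} {a : ℝ}
    (hfd : HasDerivAt f a 0) (hf0 : f 0 = 0) {c : ℝ} {U : ℝ → ℝ} (hUd : Differentiable ℝ U)
    (hUpos : ∀ ξ, 0 < U ξ) (heq : ∀ ξ, c * deriv U ξ = latticeDiffusion w d U ξ + f (U ξ))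
    (hbot : Tendsto U atBot (𝓝 0)) {Λ : ℂ} {cp κ : ℝ} (hν : 0 < Λ.im)
    (hd : ∀ i, Λ.im * |d i| ≤ π) (hκ : 0 < κ)
    (hΛ : diffusionSymbol w d Λ + (a - κ : ℝ) = cp * Λ) : cp < c := by
  obtain ⟨θ, hθ, hfθ⟩ := exists_mul_lt_of_hasDerivAt hfd hf0 (sub_lt_self a hκ)
  set W : ℝ → ℝ := fun y => (cexp (Λ * y)).im
  have hWc : Continuous W := Complex.continuous_im.comp (by fun_prop)
  set L := π / Λ.im
  have hL : 0 < L := div_pos pi_pos hν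
  have hνL : Λ.im * L = π := mul_div_cancel₀ _ hν.ne'
  obtain ⟨ε, hε, hεW⟩ := exists_pos_mul_lt_of_isCompact (isCompact_Icc (a := 0) (b := L))
    (U := fun x => min (U x) θ) (hUd.continuous.min continuous_const).continuousOn
    (fun x _ => lt_min (hUpos x) hθ) hWc.continuousOn
  have hW₁ : 0 < ε * W (L / 2) := by
    rw [show W (L / 2) = _ from im_cexp_mul_ofReal Λ (L / 2),
      show Λ.im * (L / 2) = π / 2 by rw [← hνL]; ring, sin_pi_div_two]
    positivity
  obtain ⟨s₀, hs₀, x₀, hx₀, htouch, hcontact, hlater⟩ := exists_first_contact isCompact_Icc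
    (V := fun x => ε * W x) hUd.continuous (continuous_const.mul hWc) hbot
    (fun x hx => (hεW x hx).trans_le (min_le_left _ _)) ⟨by positivity, by linarith⟩ hW₁
  have hV₀ : 0 < ε * W x₀ := htouch ▸ hUpos _
  have hx₀I : x₀ ∈ Ioo 0 L := by
    refine ⟨hx₀.1.lt_of_ne ?_, hx₀.2.lt_of_ne ?_⟩ <;> rintro rfl <;>
      simp [W, im_cexp_mul_ofReal, hνL] at hV₀
  have hderiv := deriv_eq_of_le_of_eq (Icc_mem_nhds hx₀I.1 hx₀I.2) (hUd _)
    ((hasDerivAt_im_cexp_mul_ofReal Λ x₀).const_mul ε) hcontact htouch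
  have hmono : 0 ≤ deriv U (s₀ + x₀) :=
    (hUd _).hasDerivAt.nonneg_of_forall_le_of_lt (by linarith : s₀ + x₀ < x₀) fun y hy => by
      have := hlater (y - x₀) ⟨by linarith [hy.1], by linarith [hy.2]⟩ x₀ hx₀
      rw [sub_add_cancel] at this
      linarith
  have hshift : ∀ δ, Λ.im * |δ| ≤ π → ε * W (x₀ + δ) ≤ U (s₀ + x₀ + δ) := by
    intro δ hδ
    by_cases hK : x₀ + δ ∈ Icc 0 L
    · simpa [add_assoc] using hcontact _ hK
    · exact (mul_nonpos_of_nonneg_of_nonpos hε.le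
        (im_cexp_mul_ofReal_add_nonpos hν hx₀ hδ hK)).trans (hUpos _).le
  refine lt_speed_of_contact hw (heq _) (V := fun x => ε * W x) (b := a - κ)
    (by rw [latticeDiffusion_const_mul]
        linear_combination ε * latticeDiffusion_im_cexp_add_mul hΛ x₀)
    htouch (fun i => ⟨hshift _ (hd i), ?_⟩) hderiv (hderiv ▸ hmono)
    (hfθ _ ⟨hV₀, (hεW x₀ hx₀).le.trans (min_le_right _ _)⟩)
  simpa [sub_eq_add_neg] using hshift (-d i) (by rw [abs_neg]; exact hd i)

theorem exists_diffusionSymbol_le_speed (hw : ∀ i, 0 ≤ w i) (hwd : 0 < ∑ i, w i * d i ^ 2)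
    {f : ℝ → ℝ} {a : ℝ} (hfd : HasDerivAt f a 0) (hf0 : f 0 = 0) (ha : 0 < a) {c : ℝ}
    {U : ℝ → ℝ} (hUd : Differentiable ℝ U) (hU0 : ∀ ξ, 0 ≤ U ξ)
    (heq : ∀ ξ, c * deriv U ξ = latticeDiffusion w d U ξ + f (U ξ))
    (hbot : Tendsto U atBot (𝓝 0)) (htop : Tendsto U atTop (𝓝 1)) :
    ∃ l : ℝ, 0 < l ∧ (diffusionSymbol w d l).re + a ≤ c * l := by
  by_contra! h
  set μ₁ := (|c| + 1) / (2 * ∑ i, w i * d i ^ 2)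
  have hc₁ : c < symbolSlope w d μ₁ := calc
    c < |c| + 1 := by linarith [le_abs_self c]
    _ = 2 * μ₁ * ∑ i, w i * d i ^ 2 := by simp only [μ₁]; field_simp
    _ ≤ symbolSlope w d μ₁ := mul_sum_sq_le_symbolSlope hw (by positivity)
  obtain ⟨μ, hcμ, hint⟩ := exists_slope_gt_and_intercept_pos
    (G := fun l : ℝ => (diffusionSymbol w d l).re + a)
    ((Complex.continuous_re.comp (continuous_diffusionSymbol.comp Complex.continuous_ofReal)).add
      continuous_const) continuous_symbolSlope (by simpa [diffusionSymbol_zero] using ha) h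
    (by positivity) hc₁
  obtain ⟨Λ, cp, κ, hν, hd, hc, hκ, hΛ⟩ := exists_diffusionSymbol_eq_mul hcμ hint
  exact (lt_speed_of_diffusionSymbol_eq_mul hw hfd hf0 hUd
    (pos_of_travelingWave hw hwd hf0 hU0 heq htop) heq hbot hν hd hκ hΛ).not_gt hc

end Wave

noncomputable def hexShifts (α : ℝ) : Fin 3 → ℝ := ![delta1 α, delta2 α, delta3 α]

lemma one_sixth_mul_Dh (α : ℝ) (U : ℝ → ℝ) (ξ : ℝ) :
    (1 / 6) * Dh α U ξ = latticeDiffusion (fun _ => 1 / 6) (hexShifts α) U ξ := by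
  simp only [Dh, latticeDiffusion, Fin.sum_univ_three, hexShifts, Matrix.cons_val_zero,
    Matrix.cons_val_one, Matrix.cons_val_two, Matrix.tail_cons, Matrix.head_cons]
  ring

lemma gfun_eq_diffusionSymbol (a α l : ℝ) :
    gfun a α l = (diffusionSymbol (fun _ => 1 / 6) (hexShifts α) l).re + a := by
  simp only [gfun, diffusionSymbol_ofReal_re, Fin.sum_univ_three, hexShifts, Matrix.cons_val_zero,
    Matrix.cons_val_one, Matrix.cons_val_two, Matrix.tail_cons, Matrix.head_cons]
  ring

lemma sum_sq_hexShifts (α : ℝ) : ∑ i, (1 / 6 : ℝ) * hexShifts α i ^ 2 = 1 / 4 := by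
  simp only [Fin.sum_univ_three, hexShifts, Matrix.cons_val_zero, Matrix.cons_val_one,
    Matrix.cons_val_two, Matrix.tail_cons, Matrix.head_cons, delta1, delta2, delta3]
  linear_combination (1 / 4) * sin_sq_add_cos_sq α
    + (1 / 12) * Real.sin α ^ 2 * Real.sq_sqrt (show (0 : ℝ) ≤ 3 by norm_num)

theorem stmt5 (α : ℝ) (f f' : ℝ → ℝ) (hf : FisherKPP f f')
    (c : ℝ) (U : ℝ → ℝ) (hU : IsTravelingWave α f c U) :
    cstar (f' 0) α ≤ c := by
  obtain ⟨hfd, -, hf0, -, ha, -⟩ := hf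
  obtain ⟨hC, hrange, heq, hbot, htop⟩ := hU
  have hw : ∀ _ : Fin 3, (0 : ℝ) ≤ 1 / 6 := fun _ => by norm_num
  obtain ⟨l, hl, hle⟩ := exists_diffusionSymbol_le_speed (d := hexShifts α) hw
    (by rw [sum_sq_hexShifts]; norm_num) (hfd 0 ⟨le_rfl, zero_le_one⟩) hf0 ha
    (hC.differentiable one_ne_zero) (fun ξ => (hrange ξ).1)
    (fun ξ => by rw [heq ξ, one_sixth_mul_Dh]) hbot htop
  have hbdd : BddBelow {c : ℝ | ∃ l : ℝ, 0 < l ∧ c = gfun (f' 0) α l / l} := by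
    refine ⟨0, ?_⟩
    rintro _ ⟨l, hl, rfl⟩
    rw [gfun_eq_diffusionSymbol]
    exact div_nonneg (add_nonneg (diffusionSymbol_ofReal_re_nonneg hw _) ha.le) hl.le
  calc cstar (f' 0) α ≤ gfun (f' 0) α l / l := csInf_le hbdd ⟨l, hl, rfl⟩
    _ ≤ c := by rwa [div_le_iff₀ hl, gfun_eq_diffusionSymbol]
end

section
/- (Periodicity of the minimal wave speed.) For every α ∈ ℝ, c*(α + π/3) = c*(α). -/
open Real Set Filter

/-!
Rotating α by π/3 maps the directions (δ₁, δ₂, δ₃) to (δ₃, δ₁, -δ₂). Since g_α depends on each δ_m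
only through exp(λδ_m) + exp(-λδ_m), which is even in δ_m, the function g is unchanged for every λ,
and hence so is the infimum c*.
-/

lemma delta1_add_pi_div_three (α : ℝ) : delta1 (α + π / 3) = delta3 α := by
  rw [delta1, delta3, cos_add, cos_pi_div_three, sin_pi_div_three]
  ring

lemma delta2_add_pi_div_three (α : ℝ) : delta2 (α + π / 3) = delta1 α := by
  have hsqrt : √3 * √3 = 3 := mul_self_sqrt (by norm_num)
  rw [delta2, delta1, cos_add, sin_add, cos_pi_div_three, sin_pi_div_three]
  linear_combination (cos α / 4) * hsqrt

lemma delta3_add_pi_div_three (α : ℝ) : delta3 (α + π / 3) = -delta2 α := by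
  have hsqrt : √3 * √3 = 3 := mul_self_sqrt (by norm_num)
  rw [delta3, delta2, cos_add, sin_add, cos_pi_div_three, sin_pi_div_three]
  linear_combination (-cos α / 4) * hsqrt

lemma gfun_add_pi_div_three (a α l : ℝ) : gfun a (α + π / 3) l = gfun a α l := by
  rw [gfun, gfun, delta1_add_pi_div_three, delta2_add_pi_div_three, delta3_add_pi_div_three,
    mul_neg, neg_neg]
  ring

theorem stmt7_general (a : ℝ) (α : ℝ) :
    cstar a (α + Real.pi / 3) = cstar a α := by
  simp only [cstar, gfun_add_pi_div_three]

theorem stmt7 (a : ℝ) (ha : 0 < a) (α : ℝ) :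
    cstar a (α + Real.pi / 3) = cstar a α :=
  stmt7_general a α
end

section
/- For every λ > 0 and every α ∈ (0, π/6), the following strict inequality holds: sin α·(exp(−λ·cos α) − exp(λ·cos α)) + ((√3/2)·cos α + (1/2)·sin α)·(exp(λ·((√3/2)·sin α − (1/2)·cos α)) − exp(−λ·((√3/2)·sin α − (1/2)·cos α))) + ((√3/2)·cos α − (1/2)·sin α)·(exp(λ·((√3/2)·sin α + (1/2)·cos α)) − exp(−λ·((√3/2)·sin α + (1/2)·cos α))) < 0. (This expression is, up to the positive factor λ/6, the partial derivative with respect to α of the sum of exponentials appearing in the minimal wave speed formula.) -/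
/-!
Put `u = l cos α / 2` and `v = √3 l sin α / 2`, so that `0 < v < u` for `α ∈ (0, π/6)`. Expanding
the exponentials into `sinh` and `cosh`, the expression times `√3 l / 4` becomes
`3 u cosh u sinh v - v sinh u (2 cosh u + cosh v)`. Since `t ↦ sinh³ t / (t³ cosh t)` is strictly
increasing on `(0, ∞)`, the numbers `X = v sinh u`, `Y = u sinh v` satisfy `Y³ cosh u < X³ cosh v`,
and AM-GM `3 X² Y ≤ 2 X³ + Y³` turns this into `3 Y cosh u < X (2 cosh u + cosh v)`. The
monotonicity is a log-derivative computation that reduces to `3 sinh x < x cosh x + 2 x`, which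
follows by differentiating twice.
-/

open Real Set

lemma lt_of_hasDerivAt_of_deriv_pos {f f' : ℝ → ℝ} {a x : ℝ} (hf : ∀ y, HasDerivAt f (f' y) y)
    (hf' : ∀ y, a < y → 0 < f' y) (hx : a < x) : f a < f x :=
  strictMonoOn_of_hasDerivWithinAt_pos (convex_Ici a)
    (fun y _ => (hf y).continuousAt.continuousWithinAt) (fun y _ => (hf y).hasDerivWithinAt)
    (fun y hy => hf' y (by rwa [interior_Ici] at hy)) self_mem_Ici (mem_Ici.2 hx.le) hx

namespace Real

lemma sinh_lt_mul_cosh {x : ℝ} (hx : 0 < x) : sinh x < x * cosh x := by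
  have := lt_of_hasDerivAt_of_deriv_pos (f := fun t => t * cosh t - sinh t)
    (fun y => (((hasDerivAt_id' y).mul (hasDerivAt_cosh y)).sub (hasDerivAt_sinh y)).congr_deriv
      (by ring)) (fun y hy => mul_pos hy (sinh_pos_iff.2 hy)) hx
  simpa using this

lemma two_mul_cosh_lt {x : ℝ} (hx : 0 < x) : 2 * cosh x < x * sinh x + 2 := by
  have := lt_of_hasDerivAt_of_deriv_pos (f := fun t => t * sinh t + 2 - 2 * cosh t)
    (fun y => ((((hasDerivAt_id' y).mul (hasDerivAt_sinh y)).add_const 2).sub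
      ((hasDerivAt_cosh y).const_mul 2)).congr_deriv (by ring))
    (fun y hy => sub_pos.2 (sinh_lt_mul_cosh hy)) hx
  simpa using this

lemma three_mul_sinh_lt {x : ℝ} (hx : 0 < x) : 3 * sinh x < x * cosh x + 2 * x := by
  have := lt_of_hasDerivAt_of_deriv_pos (f := fun t => t * cosh t + 2 * t - 3 * sinh t)
    (f' := fun t => t * sinh t + 2 - 2 * cosh t)
    (fun y => ((((hasDerivAt_id' y).mul (hasDerivAt_cosh y)).add
      ((hasDerivAt_id' y).const_mul 2)).sub ((hasDerivAt_sinh y).const_mul 3)).congr_deriv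
      (by ring))
    (fun y hy => by linarith [two_mul_cosh_lt hy]) hx
  simpa using this

lemma tanh_add_three_div_lt_three_mul_coth {t : ℝ} (ht : 0 < t) :
    sinh t / cosh t + 3 / t < 3 * (cosh t / sinh t) := by
  have hs : 0 < sinh t := sinh_pos_iff.2 ht
  have h := three_mul_sinh_lt (mul_pos two_pos ht)
  rw [sinh_two_mul, cosh_two_mul] at h
  have key : 3 * (cosh t / sinh t) - (sinh t / cosh t + 3 / t)
      = (2 * t * cosh t ^ 2 + t - 3 * (sinh t * cosh t)) / (t * sinh t * cosh t) := by
    field_simp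
    linear_combination (-t) * sinh_sq t
  rw [← sub_pos, key]
  apply div_pos _ (by positivity)
  nlinarith [h, sinh_sq t, mul_pos ht (mul_pos hs hs)]

lemma sinh_pow_three_div_strictMonoOn :
    StrictMonoOn (fun t => sinh t ^ 3 / (t ^ 3 * cosh t)) (Ioi 0) := by
  have hderiv : ∀ t ∈ Ioi (0 : ℝ),
      HasDerivAt (fun t => 3 * log (sinh t) - 3 * log t - log (cosh t))
        (3 * (cosh t / sinh t) - 3 * t⁻¹ - sinh t / cosh t) t := fun t ht =>
    ((((hasDerivAt_sinh t).log (sinh_pos_iff.2 ht).ne').const_mul 3).sub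
      ((hasDerivAt_log (ne_of_gt ht)).const_mul 3)).sub
      ((hasDerivAt_cosh t).log (cosh_pos t).ne')
  have hlog : StrictMonoOn (fun t => 3 * log (sinh t) - 3 * log t - log (cosh t)) (Ioi 0) :=
    strictMonoOn_of_hasDerivWithinAt_pos (convex_Ioi 0)
      (fun t ht => (hderiv t ht).continuousAt.continuousWithinAt)
      (fun t ht => by rw [interior_Ioi] at ht ⊢; exact (hderiv t ht).hasDerivWithinAt)
      (fun t ht => by
        rw [interior_Ioi] at ht
        linarith [div_eq_mul_inv (3 : ℝ) t, tanh_add_three_div_lt_three_mul_coth ht])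
  intro v hv u hu hvu
  have hexp_log : ∀ t ∈ Ioi (0 : ℝ), sinh t ^ 3 / (t ^ 3 * cosh t)
      = exp (3 * log (sinh t) - 3 * log t - log (cosh t)) := by
    intro t (ht : 0 < t)
    have hs : 0 < sinh t := sinh_pos_iff.2 ht
    have hc : 0 < cosh t := cosh_pos t
    rw [← exp_log (by positivity : 0 < sinh t ^ 3 / (t ^ 3 * cosh t)),
      log_div (by positivity) (by positivity), log_mul (by positivity) hc.ne', log_pow, log_pow]
    push_cast
    ring_nf
  simp only [hexp_log v hv, hexp_log u hu]
  exact exp_lt_exp.2 (hlog hv hu hvu)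

lemma three_mul_mul_cosh_mul_sinh_lt {u v : ℝ} (hv : 0 < v) (hvu : v < u) :
    3 * u * cosh u * sinh v < v * sinh u * (2 * cosh u + cosh v) := by
  have hu : 0 < u := hv.trans hvu
  have hmono := sinh_pow_three_div_strictMonoOn hv hu hvu
  simp only at hmono
  rw [div_lt_div_iff₀ (by positivity) (by positivity)] at hmono
  set X := v * sinh u
  set Y := u * sinh v
  have hX : 0 < X := mul_pos hv (sinh_pos_iff.2 hu)
  have hcube : Y ^ 3 * cosh u < X ^ 3 * cosh v := by linear_combination hmono
  have hY : 0 < Y := mul_pos hu (sinh_pos_iff.2 hv)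
  have hamgm : 3 * X ^ 2 * Y ≤ 2 * X ^ 3 + Y ^ 3 := by
    nlinarith [mul_nonneg (sq_nonneg (X - Y)) (add_pos (mul_pos two_pos hX) hY).le]
  have hscaled : X ^ 2 * (3 * Y * cosh u) < X ^ 2 * (X * (2 * cosh u + cosh v)) := by
    nlinarith [mul_le_mul_of_nonneg_right hamgm (cosh_pos u).le]
  calc 3 * u * cosh u * sinh v = 3 * Y * cosh u := by ring
    _ < X * (2 * cosh u + cosh v) := lt_of_mul_lt_mul_left hscaled (sq_nonneg X)
    _ = _ := by ring

lemma sqrt_three_mul_sin_lt_cos {α : ℝ} (h₁ : -(5 * π / 6) < α) (h₂ : α < π / 6) :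
    √3 * sin α < cos α := by
  have h := sin_neg_of_neg_of_neg_pi_lt (x := α - π / 6) (by linarith) (by linarith)
  rw [sin_sub, sin_pi_div_six, cos_pi_div_six] at h
  linarith

end Real

lemma sqrt_three_mul_exp_combination_eq (l s c : ℝ) :
    √3 * l / 4 * (s * (exp (-(l * c)) - exp (l * c))
      + (√3 / 2 * c + 1/2 * s) *
        (exp (l * (√3 / 2 * s - 1/2 * c)) - exp (-(l * (√3 / 2 * s - 1/2 * c))))
      + (√3 / 2 * c - 1/2 * s) *
        (exp (l * (√3 / 2 * s + 1/2 * c)) - exp (-(l * (√3 / 2 * s + 1/2 * c)))))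
    = 3 * (l * c / 2) * cosh (l * c / 2) * sinh (√3 * l * s / 2)
      - √3 * l * s / 2 * sinh (l * c / 2) * (2 * cosh (l * c / 2) + cosh (√3 * l * s / 2)) := by
  set u := l * c / 2
  set v := √3 * l * s / 2
  have hexp : ∀ x, exp x - exp (-x) = 2 * sinh x := fun x => by rw [sinh_eq]; ring
  have h3 : √3 * √3 = 3 := mul_self_sqrt (by norm_num)
  rw [show l * c = 2 * u by ring, show l * (√3 / 2 * s - 1/2 * c) = v - u by ring,
    show l * (√3 / 2 * s + 1/2 * c) = v + u by ring, ← neg_sub, hexp, hexp, hexp, sinh_two_mul,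
    sinh_sub, sinh_add]
  linear_combination l * c / 2 * cosh u * sinh v * h3

theorem stmt11 (l α : ℝ) (hl : 0 < l) (hα : α ∈ Set.Ioo (0:ℝ) (Real.pi/6)) :
    Real.sin α * (Real.exp (-(l * Real.cos α)) - Real.exp (l * Real.cos α))
      + (Real.sqrt 3 / 2 * Real.cos α + 1/2 * Real.sin α) *
        (Real.exp (l * (Real.sqrt 3 / 2 * Real.sin α - 1/2 * Real.cos α))
          - Real.exp (-(l * (Real.sqrt 3 / 2 * Real.sin α - 1/2 * Real.cos α))))
      + (Real.sqrt 3 / 2 * Real.cos α - 1/2 * Real.sin α) *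
        (Real.exp (l * (Real.sqrt 3 / 2 * Real.sin α + 1/2 * Real.cos α))
          - Real.exp (-(l * (Real.sqrt 3 / 2 * Real.sin α + 1/2 * Real.cos α)))) < 0 := by
  obtain ⟨hα₀, hα₆⟩ := hα
  have hsin : 0 < sin α := sin_pos_of_pos_of_lt_pi hα₀ (by linarith [pi_pos])
  have hv : 0 < √3 * l * sin α / 2 := by positivity
  have hvu : √3 * l * sin α / 2 < l * cos α / 2 := by
    linarith [mul_lt_mul_of_pos_left (sqrt_three_mul_sin_lt_cos (by linarith [pi_pos]) hα₆) hl]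
  refine neg_of_mul_neg_right ?_ (by positivity : 0 ≤ √3 * l / 4)
  rw [sqrt_three_mul_exp_combination_eq]
  linarith [three_mul_mul_cosh_mul_sinh_lt hv hvu]
end

section
/- Let U be a traveling wave with speed c, with c > 0 and U(ξ) > 0 for all ξ ∈ ℝ. Then the ratio U(ξ + δ)/U(ξ) is uniformly bounded: there exists a constant C > 0 such that U(ξ + δ) ≤ C·U(ξ) for all ξ ∈ ℝ and all δ ∈ [−1, 1]. -/
open Real Set Filter

/-!
Since `f ≥ 0` on `[0, 1]` and `U ≥ 0`, dropping five of the six neighbours in the wave equation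
gives `U (ξ + D) ≤ 6 (U + c U') (ξ)` for a lattice shift `D = |δᵢ| > 0`. Hence `V = e^{ξ/c} U`
satisfies the delay inequality `V'(ξ) ≥ k V(ξ + D)` with `k > 0`; in particular `V` is
nondecreasing, and integrating over `[y - D/2, y]` gives `V (y + D/2) ≤ 2/(k D) · V y`.
Iterating this bounds `V (ξ + δ) / V ξ` for `δ ≤ 1`, and undoing the weight costs a factor
`e^{1/c}` for `δ ≥ -1`.
-/

theorem Monotone.exists_shift_le_mul {V : ℝ → ℝ} (hV : Monotone V) {σ K : ℝ} (hσ : 0 < σ)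
    (hK : 0 < K) (h : ∀ y, V (y + σ) ≤ K * V y) (L : ℝ) :
    ∃ C > 0, ∀ y s, s ≤ L → V (y + s) ≤ C * V y := by
  have hiter : ∀ n : ℕ, ∀ y, V (y + n * σ) ≤ K ^ n * V y := by
    intro n
    induction n with
    | zero => simp
    | succ n ih =>
      intro y
      calc V (y + (n + 1 : ℕ) * σ) = V (y + n * σ + σ) := by push_cast; ring_nf
        _ ≤ K * V (y + n * σ) := h _
        _ ≤ K * (K ^ n * V y) := mul_le_mul_of_nonneg_left (ih y) hK.le
        _ = K ^ (n + 1) * V y := by ring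
  obtain ⟨n, hn⟩ := exists_nat_ge (L / σ)
  have hLn : L ≤ n * σ := (div_le_iff₀ hσ).1 hn
  exact ⟨K ^ n, pow_pos hK n, fun y s hs => (hV (by linarith)).trans (hiter n y)⟩

section DelayDifferentialInequality

variable {V : ℝ → ℝ} {k D : ℝ}

theorem monotone_of_mul_shift_le_deriv (hV : Differentiable ℝ V) (hV0 : ∀ x, 0 ≤ V x)
    (hk : 0 ≤ k) (h : ∀ ξ, k * V (ξ + D) ≤ deriv V ξ) : Monotone V :=
  monotone_of_deriv_nonneg hV fun ξ => (mul_nonneg hk (hV0 _)).trans (h ξ)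

theorem mul_shift_mul_le_sub_of_mul_shift_le_deriv (hV : Differentiable ℝ V)
    (hV0 : ∀ x, 0 ≤ V x) (hk : 0 ≤ k) (h : ∀ ξ, k * V (ξ + D) ≤ deriv V ξ) (x : ℝ) {t : ℝ}
    (ht : 0 ≤ t) : k * V (x + D) * t ≤ V (x + t) - V x := by
  have hmono := monotone_of_mul_shift_le_deriv hV hV0 hk h
  have hderiv : ∀ ξ ∈ interior (Ici x), k * V (x + D) ≤ deriv V ξ := by
    rw [interior_Ici]
    intro ξ hξ
    calc k * V (x + D) ≤ k * V (ξ + D) :=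
          mul_le_mul_of_nonneg_left (hmono (by linarith [mem_Ioi.1 hξ])) hk
      _ ≤ deriv V ξ := h ξ
  simpa using (convex_Ici x).mul_sub_le_image_sub_of_le_deriv hV.continuous.continuousOn
    hV.differentiableOn hderiv x self_mem_Ici (x + t) (by simpa using ht)
    (by linarith)

theorem exists_shift_le_mul_of_mul_shift_le_deriv (hV : Differentiable ℝ V)
    (hV0 : ∀ x, 0 ≤ V x) (hk : 0 < k) (hD : 0 < D) (h : ∀ ξ, k * V (ξ + D) ≤ deriv V ξ)
    (L : ℝ) : ∃ C > 0, ∀ y s, s ≤ L → V (y + s) ≤ C * V y := by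
  refine (monotone_of_mul_shift_le_deriv hV hV0 hk.le h).exists_shift_le_mul (half_pos hD)
    (K := 2 / (k * D)) (by positivity) (fun y => ?_) L
  have hgrowth := mul_shift_mul_le_sub_of_mul_shift_le_deriv hV hV0 hk.le h (y - D / 2)
    (half_pos hD).le
  rw [show y - D / 2 + D = y + D / 2 by ring, sub_add_cancel] at hgrowth
  rw [div_mul_eq_mul_div, le_div_iff₀ (by positivity)]
  linarith [hV0 (y - D / 2)]

end DelayDifferentialInequality

section ExponentialWeight

variable {U : ℝ → ℝ} {a c D : ℝ}

theorem hasDerivAt_exp_div_mul {ξ : ℝ} (hU : DifferentiableAt ℝ U ξ) :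
    HasDerivAt (fun x => exp (x / c) * U x) (exp (ξ / c) * (U ξ / c + deriv U ξ)) ξ := by
  have h : HasDerivAt (fun x => exp (x / c) * U x)
      (exp (ξ / c) * (1 / c) * U ξ + exp (ξ / c) * deriv U ξ) ξ :=
    ((hasDerivAt_id' ξ).div_const c).exp.mul hU.hasDerivAt
  convert h using 1
  ring

theorem exists_shift_le_mul_of_shift_le_mul_deriv (hc : 0 < c) (ha : 0 < a) (hD : 0 < D)
    (hU : Differentiable ℝ U) (hU0 : ∀ x, 0 ≤ U x)
    (h : ∀ ξ, U (ξ + D) ≤ a * (U ξ + c * deriv U ξ)) (L : ℝ) :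
    ∃ C > 0, ∀ ξ, ∀ δ ∈ Icc (-L) L, U (ξ + δ) ≤ C * U ξ := by
  set V : ℝ → ℝ := fun x => exp (x / c) * U x with hVdef
  have hV : ∀ ξ, HasDerivAt V (exp (ξ / c) * (U ξ / c + deriv U ξ)) ξ :=
    fun ξ => hasDerivAt_exp_div_mul (hU ξ)
  have hshift : ∀ ξ, exp (-D / c) / (a * c) * V (ξ + D) ≤ deriv V ξ := by
    intro ξ
    have hexp : exp (-D / c) * exp ((ξ + D) / c) = exp (ξ / c) := by
      rw [← exp_add]; congr 1; field_simp; ring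
    have hξ : U (ξ + D) / (a * c) ≤ U ξ / c + deriv U ξ := by
      rw [div_le_iff₀ (by positivity)]
      nlinarith [h ξ, show U ξ / c * c = U ξ by field_simp]
    calc exp (-D / c) / (a * c) * V (ξ + D) = exp (ξ / c) * (U (ξ + D) / (a * c)) := by
          rw [hVdef, ← hexp]; ring
      _ ≤ exp (ξ / c) * (U ξ / c + deriv U ξ) := mul_le_mul_of_nonneg_left hξ (exp_pos _).le
      _ = deriv V ξ := (hV ξ).deriv.symm
  obtain ⟨C, hC, hCV⟩ := exists_shift_le_mul_of_mul_shift_le_deriv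
    (fun ξ => (hV ξ).differentiableAt) (fun x => mul_nonneg (exp_pos _).le (hU0 x))
    (by positivity) hD hshift L
  refine ⟨C * exp (L / c), by positivity, fun ξ δ hδ => ?_⟩
  have hexp : exp (ξ / c) ≤ exp ((ξ + δ) / c) * exp (L / c) := by
    rw [← exp_add, ← add_div]
    exact exp_le_exp.2 (div_le_div_of_nonneg_right (by linarith [hδ.1]) hc.le)
  refine le_of_mul_le_mul_left ?_ (exp_pos ((ξ + δ) / c))
  calc exp ((ξ + δ) / c) * U (ξ + δ) ≤ C * (exp (ξ / c) * U ξ) := hCV ξ δ hδ.2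
    _ ≤ C * (exp ((ξ + δ) / c) * exp (L / c) * U ξ) :=
        mul_le_mul_of_nonneg_left (mul_le_mul_of_nonneg_right hexp (hU0 ξ)) hC.le
    _ = exp ((ξ + δ) / c) * (C * exp (L / c) * U ξ) := by ring

end ExponentialWeight

theorem le_add_add_sub_of_nonneg {U : ℝ → ℝ} (hU0 : ∀ x, 0 ≤ U x) (ξ d : ℝ) :
    U (ξ + |d|) ≤ U (ξ + d) + U (ξ - d) := by
  rcases abs_choice d with hd | hd
  · rw [hd]
    linarith [hU0 (ξ - d)]
  · rw [hd, ← sub_eq_add_neg]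
    linarith [hU0 (ξ + d)]

theorem delta1_ne_zero_or_delta2_ne_zero (α : ℝ) : delta1 α ≠ 0 ∨ delta2 α ≠ 0 := by
  by_contra! ⟨h1, h2⟩
  simp only [delta1, delta2] at h1 h2
  rw [h1, mul_zero, zero_add, mul_eq_zero] at h2
  have := sin_sq_add_cos_sq α
  rcases h2 with h2 | h2
  · exact absurd h2 (by positivity)
  · rw [h1, h2] at this; norm_num at this

theorem exists_pos_shift_le_Dh (α : ℝ) :
    ∃ D > 0, ∀ U : ℝ → ℝ, (∀ x, 0 ≤ U x) → ∀ ξ, U (ξ + D) - 6 * U ξ ≤ Dh α U ξ := by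
  rcases delta1_ne_zero_or_delta2_ne_zero α with h | h
  · refine ⟨|delta1 α|, abs_pos.2 h, fun U hU0 ξ => ?_⟩
    have := le_add_add_sub_of_nonneg hU0 ξ (delta1 α)
    unfold Dh
    linarith [hU0 (ξ + delta2 α), hU0 (ξ - delta2 α), hU0 (ξ + delta3 α), hU0 (ξ - delta3 α)]
  · refine ⟨|delta2 α|, abs_pos.2 h, fun U hU0 ξ => ?_⟩
    have := le_add_add_sub_of_nonneg hU0 ξ (delta2 α)
    unfold Dh
    linarith [hU0 (ξ + delta1 α), hU0 (ξ - delta1 α), hU0 (ξ + delta3 α), hU0 (ξ - delta3 α)]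

theorem FisherKPP.nonneg {f f' : ℝ → ℝ} (hf : FisherKPP f f') {s : ℝ} (hs : s ∈ Icc 0 1) :
    0 ≤ f s := by
  obtain ⟨-, -, hf0, hf1, -, hpos⟩ := hf
  rcases hs.1.eq_or_lt with rfl | hs0
  · exact hf0.ge
  rcases hs.2.eq_or_lt with rfl | hs1
  · exact hf1.ge
  exact (hpos s ⟨hs0, hs1⟩).1.le

theorem IsTravelingWave.Dh_le {α c : ℝ} {f f' U : ℝ → ℝ} (hU : IsTravelingWave α f c U)
    (hf : FisherKPP f f') (ξ : ℝ) : Dh α U ξ ≤ 6 * c * deriv U ξ := by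
  linarith [hU.2.2.1 ξ, hf.nonneg (hU.2.1 ξ)]

theorem stmt12_general (α : ℝ) (f f' : ℝ → ℝ) (hf : FisherKPP f f')
    (c : ℝ) (U : ℝ → ℝ) (hU : IsTravelingWave α f c U)
    (hc : 0 < c) :
    ∃ C : ℝ, 0 < C ∧ ∀ ξ : ℝ, ∀ δ ∈ Set.Icc (-1 : ℝ) 1, U (ξ + δ) ≤ C * U ξ := by
  obtain ⟨D, hD, hDh⟩ := exists_pos_shift_le_Dh α
  have hU0 : ∀ x, 0 ≤ U x := fun x => (hU.2.1 x).1
  have hdelay : ∀ ξ, U (ξ + D) ≤ 6 * (U ξ + c * deriv U ξ) := fun ξ => by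
    linarith [hDh U hU0 ξ, hU.Dh_le hf ξ]
  obtain ⟨C, hC, hCU⟩ := exists_shift_le_mul_of_shift_le_mul_deriv hc (by norm_num) hD
    (hU.1.differentiable one_ne_zero) hU0 hdelay 1
  exact ⟨C, hC, hCU⟩

theorem stmt12 (α : ℝ) (f f' : ℝ → ℝ) (hf : FisherKPP f f')
    (c : ℝ) (U : ℝ → ℝ) (hU : IsTravelingWave α f c U)
    (hc : 0 < c) (hUpos : ∀ ξ : ℝ, 0 < U ξ) :
    ∃ C : ℝ, 0 < C ∧ ∀ ξ : ℝ, ∀ δ ∈ Set.Icc (-1 : ℝ) 1, U (ξ + δ) ≤ C * U ξ :=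
  stmt12_general α f f' hf c U hU hc
end
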